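/- Let H be Fréchet differentiable on ℝ^d, and let a sequence {(x_n, s_n)}, n ≥ 1, be generated by the penalty convex-concave procedure: for each n ≥ 0, t_n ≻_{K*} 0, v_n ∈ ∂h₀(x_n), and (x_{n+1}, s_{n+1}) is a globally optimal solution of the convex problem: minimize over (x, s) the function g₀(x) − ⟨v_n, x − x_n⟩ + ⟨t_n, s⟩ subject to G(x) − H(x_n) − DH(x_n)(x − x_n) ⪯_K s, s ⪰_K 0, x ∈ A. Then for every n ≥ 1, f₀(x_{n+1}) + ⟨t_n, s_{n+1}⟩ ≤ f₀(x_n) + ⟨t_n, s_n⟩, and this inequality is strict if x_n is not a generalized critical point for t_n. -/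

import Mathlib

open scoped RealInnerProductSpace Pointwise

/-- A function with values in a space ordered by a cone `K` is `K`-convex if
`Φ(αx₁ + (1−α)x₂) ⪯_K αΦ(x₁) + (1−α)Φ(x₂)` for all `x₁, x₂` and `α ∈ [0,1]`. -/
def KConvex {X Y : Type*} [AddCommGroup X] [Module ℝ X] [AddCommGroup Y] [Module ℝ Y]
    (K : Set Y) (Φ : X → Y) : Prop :=
  ∀ (x₁ x₂ : X) (α : ℝ), α ∈ Set.Icc (0 : ℝ) 1 →
    α • Φ x₁ + (1 - α) • Φ x₂ - Φ (α • x₁ + (1 - α) • x₂) ∈ K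

/-- The subdifferential of a convex function `φ : ℝ^d → ℝ` at a point `x`. -/
def subdiff {d : ℕ} (φ : EuclideanSpace ℝ (Fin d) → ℝ) (x : EuclideanSpace ℝ (Fin d)) :
    Set (EuclideanSpace ℝ (Fin d)) :=
  {w | ∀ y, φ x + ⟪w, y - x⟫ ≤ φ y}

/-- `x*` is a generalized critical point for `t`: there exist `v* ∈ ∂h₀(x*)` and `s* ⪰_K 0`
such that `(x*, s*)` is a globally optimal solution of the penalized linearized problem. -/
def GenCritical {d : ℕ} {Y : Type*}
    [NormedAddCommGroup Y] [NormedSpace ℝ Y]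
    (K : Set Y) (g₀ h₀ : EuclideanSpace ℝ (Fin d) → ℝ)
    (G H : EuclideanSpace ℝ (Fin d) → Y) (A : Set (EuclideanSpace ℝ (Fin d)))
    (DH : EuclideanSpace ℝ (Fin d) →L[ℝ] Y) (t : Y →L[ℝ] ℝ)
    (xs : EuclideanSpace ℝ (Fin d)) : Prop :=
  ∃ vs ∈ subdiff h₀ xs, ∃ ss ∈ K,
    (xs ∈ A ∧ ss - (G xs - H xs - DH (xs - xs)) ∈ K) ∧
    ∀ x s, x ∈ A → s ∈ K → s - (G x - H xs - DH (x - xs)) ∈ K →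
      g₀ xs - ⟪vs, xs - xs⟫ + t ss ≤ g₀ x - ⟪vs, x - xs⟫ + t s

/-!
A differentiable `K`-convex map lies `K`-above its linearizations, so the current iterate
`(x n, s n)`, feasible for the subproblem linearized at `x (n - 1)`, is also feasible for the one
linearized at `x n`. Comparing it with the optimal `(x (n + 1), s (n + 1))` and bounding `-h₀` by
the subgradient inequality at `x n` gives the descent. If the descent were not strict, `(x n, s n)`
would itself be optimal for the subproblem at `x n`, i.e. `x n` would be a generalized critical
point.
-/

section Cone

variable {Y : Type*} [AddCommGroup Y] [Module ℝ Y] {K : Set Y}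

theorem Convex.add_mem_of_smul_mem (hKconvex : Convex ℝ K)
    (hKcone : ∀ c : ℝ, 0 ≤ c → ∀ y ∈ K, c • y ∈ K) {a b : Y} (ha : a ∈ K) (hb : b ∈ K) :
    a + b ∈ K := by
  have hmid := hKconvex ha hb (by norm_num : (0 : ℝ) ≤ 1 / 2) (by norm_num : (0 : ℝ) ≤ 1 / 2)
    (by norm_num)
  convert hKcone 2 (by norm_num) _ hmid using 1
  module

theorem KConvex.sub_sub_smul_inv_sub_mem {X : Type*} [AddCommGroup X] [Module ℝ X]
    (hKcone : ∀ c : ℝ, 0 ≤ c → ∀ y ∈ K, c • y ∈ K) {H : X → Y} (hH : KConvex K H)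
    (p y : X) {α : ℝ} (hα : α ∈ Set.Ioc 0 1) :
    H y - H p - α⁻¹ • (H (p + α • (y - p)) - H p) ∈ K := by
  have hchord := hKcone α⁻¹ (inv_nonneg.mpr hα.1.le) _ (hH y p α ⟨hα.1.le, hα.2⟩)
  have hline : α • y + (1 - α) • p = p + α • (y - p) := by module
  rw [hline] at hchord
  convert hchord using 1
  have hα0 : α ≠ 0 := hα.1.ne'
  match_scalars <;> field_simp
  ring

end Cone

theorem KConvex.sub_sub_fderiv_mem {E Y : Type*} [NormedAddCommGroup E] [NormedSpace ℝ E]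
    [NormedAddCommGroup Y] [NormedSpace ℝ Y] {K : Set Y}
    (hKclosed : IsClosed K) (hKcone : ∀ c : ℝ, 0 ≤ c → ∀ y ∈ K, c • y ∈ K)
    {H : E → Y} (hH : KConvex K H) {p : E} {DHp : E →L[ℝ] Y} (hd : HasFDerivAt H DHp p)
    (y : E) : H y - H p - DHp (y - p) ∈ K := by
  refine hKclosed.mem_of_tendsto
    (tendsto_const_nhds.sub (hd.hasLineDerivAt (y - p)).tendsto_slope_zero_right) ?_
  filter_upwards [Ioc_mem_nhdsGT (zero_lt_one' ℝ)] with α hα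
  exact hH.sub_sub_smul_inv_sub_mem hKcone p y hα

theorem KConvex.sub_sub_mem_of_sub_linearization_mem {E Y : Type*} [NormedAddCommGroup E]
    [NormedSpace ℝ E] [NormedAddCommGroup Y] [NormedSpace ℝ Y] {K : Set Y}
    (hKclosed : IsClosed K) (hKconvex : Convex ℝ K)
    (hKcone : ∀ c : ℝ, 0 ≤ c → ∀ y ∈ K, c • y ∈ K) {G H : E → Y} (hH : KConvex K H)
    {p q : E} {DHq : E →L[ℝ] Y} (hd : HasFDerivAt H DHq q) {s : Y}
    (hfeas : s - (G p - H q - DHq (p - q)) ∈ K) :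
    s - (G p - H p) ∈ K := by
  convert hKconvex.add_mem_of_smul_mem hKcone hfeas
    (hH.sub_sub_fderiv_mem hKclosed hKcone hd p) using 1
  abel

theorem genCritical_of_le_optimal {d : ℕ} {Y : Type*} [NormedAddCommGroup Y] [NormedSpace ℝ Y]
    {K : Set Y} {g₀ h₀ : EuclideanSpace ℝ (Fin d) → ℝ} {G H : EuclideanSpace ℝ (Fin d) → Y}
    {A : Set (EuclideanSpace ℝ (Fin d))} {DH : EuclideanSpace ℝ (Fin d) →L[ℝ] Y}
    {t : Y →L[ℝ] ℝ} {xs w : EuclideanSpace ℝ (Fin d)} {ss : Y} {c : ℝ}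
    (hw : w ∈ subdiff h₀ xs) (hxs : xs ∈ A) (hss : ss ∈ K)
    (hfeas : ss - (G xs - H xs - DH (xs - xs)) ∈ K)
    (hopt : ∀ y σ, y ∈ A → σ ∈ K → σ - (G y - H xs - DH (y - xs)) ∈ K →
      c ≤ g₀ y - ⟪w, y - xs⟫ + t σ)
    (hle : g₀ xs + t ss ≤ c) :
    GenCritical K g₀ h₀ G H A DH t xs := by
  refine ⟨w, hw, ss, hss, ⟨hxs, hfeas⟩, fun y σ hy hσ hyσ => ?_⟩
  simpa using hle.trans (hopt y σ hy hσ hyσ)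

theorem stmt_19_general {d : ℕ} {Y : Type*}
    [NormedAddCommGroup Y] [NormedSpace ℝ Y]
    (K : Set Y) (hKclosed : IsClosed K) (hKconvex : Convex ℝ K)
    (hKcone : ∀ c : ℝ, 0 ≤ c → ∀ y ∈ K, c • y ∈ K)
    (g₀ h₀ : EuclideanSpace ℝ (Fin d) → ℝ)
    (G H : EuclideanSpace ℝ (Fin d) → Y)
    (hH : KConvex K H)
    (A : Set (EuclideanSpace ℝ (Fin d)))
    -- H is Fréchet differentiable on ℝ^d with derivative DH
    (DH : EuclideanSpace ℝ (Fin d) → EuclideanSpace ℝ (Fin d) →L[ℝ] Y)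
    (hHdiff : ∀ p, HasFDerivAt H (DH p) p)
    -- the sequence generated by the penalty convex-concave procedure
    (x : ℕ → EuclideanSpace ℝ (Fin d)) (s : ℕ → Y)
    (v : ℕ → EuclideanSpace ℝ (Fin d)) (t : ℕ → Y →L[ℝ] ℝ)
    (hv : ∀ n, v n ∈ subdiff h₀ (x n))
    (hsol : ∀ n,
      (x (n + 1) ∈ A ∧ s (n + 1) ∈ K ∧
        s (n + 1) - (G (x (n + 1)) - H (x n) - DH (x n) (x (n + 1) - x n)) ∈ K) ∧
      ∀ y σ, y ∈ A → σ ∈ K → σ - (G y - H (x n) - DH (x n) (y - x n)) ∈ K →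
        g₀ (x (n + 1)) - ⟪v n, x (n + 1) - x n⟫ + t n (s (n + 1)) ≤
          g₀ y - ⟪v n, y - x n⟫ + t n σ) :
    ∀ n : ℕ, 1 ≤ n →
      (g₀ (x (n + 1)) - h₀ (x (n + 1)) + t n (s (n + 1)) ≤
        g₀ (x n) - h₀ (x n) + t n (s n)) ∧
      (¬ GenCritical K g₀ h₀ G H A (DH (x n)) (t n) (x n) →
        g₀ (x (n + 1)) - h₀ (x (n + 1)) + t n (s (n + 1)) <
          g₀ (x n) - h₀ (x n) + t n (s n)) := by
  intro n hn
  obtain ⟨m, rfl⟩ := Nat.exists_eq_add_of_le' hn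
  obtain ⟨⟨hxA, hsK, hsfeas⟩, -⟩ := hsol m
  have hfeas : s (m + 1) - (G (x (m + 1)) - H (x (m + 1))
      - DH (x (m + 1)) (x (m + 1) - x (m + 1))) ∈ K := by
    simpa using hH.sub_sub_mem_of_sub_linearization_mem hKclosed hKconvex hKcone (hHdiff _) hsfeas
  have hdescent := (hsol (m + 1)).2 _ _ hxA hsK hfeas
  simp only [sub_self, inner_zero_right, sub_zero] at hdescent
  have hsub := hv (m + 1) (x (m + 1 + 1))
  refine ⟨by linarith, fun hncrit => lt_of_not_ge fun hle => hncrit ?_⟩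
  exact genCritical_of_le_optimal (hv _) hxA hsK hfeas (hsol _).2 (by linarith)

theorem stmt_19 {d : ℕ} {Y : Type*}
    [NormedAddCommGroup Y] [NormedSpace ℝ Y] [CompleteSpace Y]
    (K : Set Y) (hKclosed : IsClosed K) (hKconvex : Convex ℝ K)
    (hKcone : ∀ c : ℝ, 0 ≤ c → ∀ y ∈ K, c • y ∈ K)
    (hKpointed : K ∩ (-K) = {0})
    (g₀ h₀ : EuclideanSpace ℝ (Fin d) → ℝ)
    (hg₀ : ConvexOn ℝ Set.univ g₀) (hh₀ : ConvexOn ℝ Set.univ h₀)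
    (G H : EuclideanSpace ℝ (Fin d) → Y)
    (hG : KConvex K G) (hH : KConvex K H)
    (A : Set (EuclideanSpace ℝ (Fin d))) (hAclosed : IsClosed A) (hAconvex : Convex ℝ A)
    -- H is Fréchet differentiable on ℝ^d with derivative DH
    (DH : EuclideanSpace ℝ (Fin d) → EuclideanSpace ℝ (Fin d) →L[ℝ] Y)
    (hHdiff : ∀ p, HasFDerivAt H (DH p) p)
    -- the sequence generated by the penalty convex-concave procedure
    (x : ℕ → EuclideanSpace ℝ (Fin d)) (s : ℕ → Y)
    (v : ℕ → EuclideanSpace ℝ (Fin d)) (t : ℕ → Y →L[ℝ] ℝ)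
    (hx0 : x 0 ∈ A)
    (ht : ∀ n, ∀ y ∈ K, 0 ≤ t n y) (htpos : ∀ n, ∀ y ∈ K, y ≠ 0 → 0 < t n y)
    (hv : ∀ n, v n ∈ subdiff h₀ (x n))
    (hsol : ∀ n,
      (x (n + 1) ∈ A ∧ s (n + 1) ∈ K ∧
        s (n + 1) - (G (x (n + 1)) - H (x n) - DH (x n) (x (n + 1) - x n)) ∈ K) ∧
      ∀ y σ, y ∈ A → σ ∈ K → σ - (G y - H (x n) - DH (x n) (y - x n)) ∈ K →
        g₀ (x (n + 1)) - ⟪v n, x (n + 1) - x n⟫ + t n (s (n + 1)) ≤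
          g₀ y - ⟪v n, y - x n⟫ + t n σ) :
    ∀ n : ℕ, 1 ≤ n →
      (g₀ (x (n + 1)) - h₀ (x (n + 1)) + t n (s (n + 1)) ≤
        g₀ (x n) - h₀ (x n) + t n (s n)) ∧
      (¬ GenCritical K g₀ h₀ G H A (DH (x n)) (t n) (x n) →
        g₀ (x (n + 1)) - h₀ (x (n + 1)) + t n (s (n + 1)) <
          g₀ (x n) - h₀ (x n) + t n (s n)) :=
  stmt_19_general K hKclosed hKconvex hKcone g₀ h₀ G H hH A DH hHdiff x s v t hv hsol
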